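/- Let R = E₀₂ − E₁₁ + E₂₀ ∈ M₃(ℂ) and let W_sym(X) = (1/4)(Tr(X)·Id₃ + Xᵗ) and W_asym(X) = (1/2)(Tr(X)·Id₃ − Xᵗ) be the extremal Werner–Holevo channels on M₃(ℂ). Then for all X ∈ M₃(ℂ): R*·W_asym(X)·R = Φ₂(X), and R*·W_sym(X)·R = (1/6)·Φ₀(X) + (5/6)·Φ₄(X). -/
import Mathlib


open Matrix BigOperators
open scoped Kronecker ComplexOrder

noncomputable section


/-- `Φ^{2→2}_2`. -/
def Phi2 (A : Matrix (Fin 3) (Fin 3) ℂ) : Matrix (Fin 3) (Fin 3) ℂ :=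
  (1 / 2 : ℂ) •
    !![A 0 0 + A 1 1, A 1 2, -(A 0 2);
       A 2 1, A 0 0 + A 2 2, A 0 1;
       -(A 2 0), A 1 0, A 1 1 + A 2 2]

/-- `Φ^{2→2}_4`. -/
def Phi4 (A : Matrix (Fin 3) (Fin 3) ℂ) : Matrix (Fin 3) (Fin 3) ℂ :=
  (1 / 10 : ℂ) •
    !![A 0 0 + 3 * A 1 1 + 6 * A 2 2, -2 * A 0 1 - 3 * A 1 2, A 0 2;
       -2 * A 1 0 - 3 * A 2 1, 3 * A 0 0 + 4 * A 1 1 + 3 * A 2 2, -3 * A 0 1 - 2 * A 1 2;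
       A 2 0, -3 * A 1 0 - 2 * A 2 1, 6 * A 0 0 + 3 * A 1 1 + A 2 2]

/-- `N_{p,q} = (1-p-q)Φ₀ + pΦ₂ + qΦ₄` (with `Φ₀ = id`). -/
def Nmap (p q : ℝ) (A : Matrix (Fin 3) (Fin 3) ℂ) : Matrix (Fin 3) (Fin 3) ℂ :=
  ((1 - p - q : ℝ) : ℂ) • A + ((p : ℝ) : ℂ) • Phi2 A + ((q : ℝ) : ℂ) • Phi4 A

/-- `R = E₀₂ - E₁₁ + E₂₀`. -/
def Rmat : Matrix (Fin 3) (Fin 3) ℂ := !![0, 0, 1; 0, -1, 0; 1, 0, 0]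

/-- The symmetric Werner-Holevo channel `W_sym(X) = (1/4)(Tr(X)·Id₃ + Xᵗ)`. -/
def Wsym (X : Matrix (Fin 3) (Fin 3) ℂ) : Matrix (Fin 3) (Fin 3) ℂ :=
  (1 / 4 : ℂ) • (X.trace • (1 : Matrix (Fin 3) (Fin 3) ℂ) + Xᵀ)

/-- The antisymmetric Werner-Holevo channel `W_asym(X) = (1/2)(Tr(X)·Id₃ - Xᵗ)`. -/
def Wasym (X : Matrix (Fin 3) (Fin 3) ℂ) : Matrix (Fin 3) (Fin 3) ℂ :=
  (1 / 2 : ℂ) • (X.trace • (1 : Matrix (Fin 3) (Fin 3) ℂ) - Xᵀ)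

lemma vhvt0 :
    Matrix.vecHead (Matrix.vecTail (fun _ : Fin 2 => fun h : OfNat ℂ 0 => @OfNat.ofNat ℂ 0 h))
      (@Zero.toOfNat0 ℂ _) = 0 := rfl

lemma RmatH : Rmatᴴ = Rmat := by
  ext i j
  fin_cases i <;> fin_cases j <;> simp [Rmat, Matrix.conjTranspose_apply, Matrix.vecHead, Matrix.vecTail]

set_option maxHeartbeats 1000000 in
/-- `R*·W_asym(X)·R = Φ₂(X)` and
`R*·W_sym(X)·R = (1/6)Φ₀(X) + (5/6)Φ₄(X)` for all `X ∈ M₃(ℂ)`. -/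
theorem stmt_18 (X : Matrix (Fin 3) (Fin 3) ℂ) :
    Rmatᴴ * Wasym X * Rmat = Phi2 X
    ∧ Rmatᴴ * Wsym X * Rmat = (1 / 6 : ℂ) • X + (5 / 6 : ℂ) • Phi4 X := by
  constructor <;>
  · rw [RmatH]
    ext i j
    fin_cases i <;> fin_cases j <;>
      simp only [Matrix.mul_apply, Fin.sum_univ_three] <;>
      simp [Rmat, Wasym, Wsym, Phi2, Phi4, Matrix.trace_fin_three, Matrix.one_apply,
        Matrix.transpose_apply, Matrix.sub_apply, Matrix.add_apply, Matrix.smul_apply,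
        smul_eq_mul, vhvt0] <;> ring

end
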